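/- Soundness of the repair enumerator with respect to the grammar: every token sequence T_gen produced by a terminating run of the candidate enumeration transition system starting from stack [S, $] is a prefix of (the tokenization of) some string in L(G); in particular, if the run consumes the full stack, T_gen itself is derivable from S in G. -/

import Mathlib

open Classical

universe uT uN
variable {T : Type uT}

/-- Context-free grammar with nonterminals in an arbitrary universe `uN`, as
`ContextFreeGrammar.{uN, uT}` was in the older Mathlib. -/
structure ContextFreeGrammarU.{vN, vT} (T : Type vT) where
  /-- Type of nonterminals. -/
  NT : Type vN
  /-- Initial nonterminal. -/
  initial : NT
  /-- Rewrite rules. -/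
  rules : Finset (ContextFreeRule T NT)

namespace ContextFreeGrammarU

/-- One rewriting step. -/
def Produces (g : ContextFreeGrammarU.{uN} T) (u v : List (Symbol T g.NT)) : Prop :=
  ∃ r ∈ g.rules, r.Rewrites u v

/-- Some number of rewriting steps. -/
abbrev Derives (g : ContextFreeGrammarU.{uN} T) :
    List (Symbol T g.NT) → List (Symbol T g.NT) → Prop :=
  Relation.ReflTransGen g.Produces

/-- Derivable from the initial nonterminal. -/
def Generates (g : ContextFreeGrammarU.{uN} T) (s : List (Symbol T g.NT)) : Prop :=
  g.Derives [Symbol.nonterminal g.initial] s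

/-- The language generated by `g`. -/
def language (g : ContextFreeGrammarU.{uN} T) : Language T :=
  { w : List T | g.Generates (w.map Symbol.terminal) }

end ContextFreeGrammarU

/-- States of the candidate-enumeration transition system. -/
abbrev EnumState (g : ContextFreeGrammarU.{uN} T) :=
  List (Symbol T g.NT) × List T × List T

/-- Transition rules of the candidate enumerator (see `EnumStep` in the paper):
pop unreliable terminals onto `T_gen`, pop reliable terminals matching `T_rel`
onto `T_gen`, and expand nonterminals via productions of `G`. -/
inductive EnumStep (g : ContextFreeGrammarU.{uN} T) (U : Set T) :
    EnumState g → EnumState g → Prop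
  | unreliable {A : List (Symbol T g.NT)} {Tg Tr : List T} {a : T} (ha : a ∈ U) :
      EnumStep g U (Symbol.terminal a :: A, Tg, Tr) (A, Tg ++ [a], Tr)
  | reliable {A : List (Symbol T g.NT)} {Tg Tr : List T} {a : T} (ha : a ∉ U) :
      EnumStep g U (Symbol.terminal a :: A, Tg, a :: Tr) (A, Tg ++ [a], Tr)
  | expand {A : List (Symbol T g.NT)} {Tg Tr : List T}
      (r : ContextFreeRule T g.NT) (hr : r ∈ g.rules) :
      EnumStep g U (Symbol.nonterminal r.input :: A, Tg, Tr) (r.output ++ A, Tg, Tr)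

namespace EnumState

variable {g : ContextFreeGrammarU.{uN} T}

def sententialForm (s : EnumState g) : List (Symbol T g.NT) :=
  s.2.1.map Symbol.terminal ++ s.1

end EnumState

/-- Popping a terminal only moves it from the stack to `T_gen`, leaving `T_gen ++ A` unchanged;
expanding the top nonterminal is one leftmost derivation step. -/
theorem EnumStep.derives_sententialForm {g : ContextFreeGrammarU.{uN} T} {U : Set T}
    {s s' : EnumState g} (hs : EnumStep g U s s') :
    g.Derives s.sententialForm s'.sententialForm := by
  cases hs with
  | unreliable _ | reliable _ => simpa [EnumState.sententialForm] using .refl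
  | @expand A Tg _ r hr =>
    refine .single ⟨r, hr, ?_⟩
    simpa [EnumState.sententialForm] using r.rewrites_of_exists_parts (Tg.map Symbol.terminal) A

/-- Soundness of the repair enumerator with respect to the grammar.  The invariant:
at every state `⟨A, T_gen, T_rel⟩` reachable from `⟨[S], [], T_rel₀⟩`, the
sentential form `T_gen ++ A` is derivable from the start symbol `S`.  In
particular, if the run consumes the full stack, `T_gen` itself (as a terminal
string) is derivable from `S`, i.e. `T_gen ∈ L(G)`. -/
theorem enum_sound (g : ContextFreeGrammarU.{uN} T) (U : Set T)
    (Tr0 Tr Tgen : List T) (A : List (Symbol T g.NT))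
    (h : Relation.ReflTransGen (EnumStep g U)
      ([Symbol.nonterminal g.initial], [], Tr0) (A, Tgen, Tr)) :
    g.Derives [Symbol.nonterminal g.initial] (Tgen.map Symbol.terminal ++ A) ∧
    (A = [] → Tgen ∈ g.language) := by
  have hderives : g.Derives [Symbol.nonterminal g.initial] (Tgen.map Symbol.terminal ++ A) :=
    h.lift' EnumState.sententialForm fun _ _ => EnumStep.derives_sententialForm
  refine ⟨hderives, ?_⟩
  rintro rfl
  show g.Derives _ (Tgen.map Symbol.terminal)
  simpa using hderives
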